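/- Let C be a hereditary class of graphs. Then the class G_C is hereditary, i.e., every induced subgraph of a graph in G_C belongs (up to isomorphism) to G_C. -/

import Mathlib

open SimpleGraph

namespace PaperSep

variable {V : Type} {W : Type}

/-- There is a walk from `a` to `b` in `G` all of whose vertices avoid the set `S`. -/
def ConnAvoid (G : SimpleGraph V) (S : Set V) (a b : V) : Prop :=
  ∃ p : G.Walk a b, ∀ v ∈ p.support, v ∉ S

/-- `S` is an `(a,b)`-separator of `G`. -/
def IsSep (G : SimpleGraph V) (a b : V) (S : Set V) : Prop :=
  a ∉ S ∧ b ∉ S ∧ ¬ ConnAvoid G S a b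

/-- `S` is a minimal `(a,b)`-separator of `G`. -/
def IsMinSep (G : SimpleGraph V) (a b : V) (S : Set V) : Prop :=
  IsSep G a b S ∧ ∀ T ⊂ S, ¬ IsSep G a b T

/-- `S` is a minimal separator of `G`. -/
def IsMinimalSeparator (G : SimpleGraph V) (S : Set V) : Prop :=
  ∃ a b : V, a ≠ b ∧ ¬ G.Adj a b ∧ IsMinSep G a b S

/-- `K` is a cutset of `G`, i.e. `G − K` is disconnected. -/
def IsCutset (G : SimpleGraph V) (K : Set V) : Prop :=
  ∃ a b : V, a ∉ K ∧ b ∉ K ∧ ¬ ConnAvoid G K a b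

/-- `K` is a minimal cutset of `G`. -/
def IsMinimalCutset (G : SimpleGraph V) (K : Set V) : Prop :=
  IsCutset G K ∧ ∀ T ⊂ K, ¬ IsCutset G T

/-- A class of finite graphs. -/
def GraphClass : Type 1 :=
  ∀ (α : Type) [Finite α], SimpleGraph α → Prop

/-- A class is hereditary if it is closed under isomorphism and induced subgraphs. -/
def Hereditary (C : GraphClass) : Prop :=
  ∀ (α : Type) [Finite α] (G : SimpleGraph α) (β : Type) [Finite β] (H : SimpleGraph β)
    (s : Set α), Nonempty (H ≃g G.induce s) → C α G → C β H

/-- `G ∈ 𝒢_C` : every minimal separator of `G` induces a graph in `C`. -/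
def MemGC (C : GraphClass) {α : Type} [Finite α] (G : SimpleGraph α) : Prop :=
  ∀ S : Set α, IsMinimalSeparator G S → C ↥S (G.induce S)

/-- The class `𝒢_C`. -/
def GCclass (C : GraphClass) : GraphClass :=
  fun α inst G => @MemGC C α inst G

/-- `S` is a union of `k` (possibly empty) cliques of `G`. -/
def UnionOfCliques (G : SimpleGraph V) (k : ℕ) (S : Set V) : Prop :=
  ∃ f : Fin k → Set V, (∀ i, G.IsClique (f i)) ∧ S = ⋃ i, f i

/-- `G ∈ 𝒢_k` : every minimal separator of `G` is a union of `k` cliques. -/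
def MemGk (k : ℕ) (G : SimpleGraph V) : Prop :=
  ∀ S : Set V, IsMinimalSeparator G S → UnionOfCliques G k S

/-- The class `𝒢_k`. -/
def Gkclass (k : ℕ) : GraphClass := fun _ _ G => MemGk k G

/-- The class `𝒞_k` of graphs whose vertex set is a union of `k` cliques. -/
def Ckclass (k : ℕ) : GraphClass := fun _ _ G => UnionOfCliques G k Set.univ

/-- An induced minor model of `H` in `G`. -/
def IsIMModel (G : SimpleGraph V) (H : SimpleGraph W) (X : W → Set V) : Prop :=
  (∀ w, (X w).Nonempty) ∧
  (∀ u w : W, u ≠ w → Disjoint (X u) (X w)) ∧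
  (∀ w, (G.induce (X w)).Connected) ∧
  (∀ u w : W, u ≠ w → (H.Adj u w ↔ ∃ a ∈ X u, ∃ b ∈ X w, G.Adj a b))

/-- `H` is an induced minor of `G`. -/
def IsInducedMinor (H : SimpleGraph W) (G : SimpleGraph V) : Prop :=
  ∃ X : W → Set V, IsIMModel G H X

/-- The class `C` is closed under induced minors. -/
def IMClosed (C : GraphClass) : Prop :=
  ∀ (α : Type) [Finite α] (G : SimpleGraph α) (β : Type) [Finite β] (H : SimpleGraph β),
    C α G → IsInducedMinor H G → C β H

/-- The class `C` is closed under the addition of edges. -/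
def EdgeAddClosed (C : GraphClass) : Prop :=
  ∀ (α : Type) [Finite α] (G : SimpleGraph α) (a b : α), a ≠ b → ¬ G.Adj a b →
    C α G → C α (G ⊔ SimpleGraph.edge a b)

/-- `G ∈ ℳ_C` : `G ∉ C` but every proper induced minor of `G` is in `C`.
(For finite graphs, the proper induced minors of `G` are exactly the induced minors of `G`
not isomorphic to `G`.) -/
def MemMC (C : GraphClass) {α : Type} [Finite α] (G : SimpleGraph α) : Prop :=
  ¬ C α G ∧
  ∀ (β : Type) [Finite β] (H : SimpleGraph β),
    IsInducedMinor H G → IsEmpty (H ≃g G) → C β H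

/-- The complete join of two graphs. -/
def join (G : SimpleGraph V) (H : SimpleGraph W) : SimpleGraph (V ⊕ W) :=
  SimpleGraph.fromRel (fun x y =>
    match x, y with
    | Sum.inl a, Sum.inl b => G.Adj a b
    | Sum.inr a, Sum.inr b => H.Adj a b
    | _, _ => True)

/-- The class `C` is closed under the addition of universal vertices (up to isomorphism). -/
def UnivAddClosed (C : GraphClass) : Prop :=
  ∀ (α : Type) [Finite α] (G : SimpleGraph α) (β : Type) [Finite β] (H : SimpleGraph β),
    C α G → Nonempty (H ≃g join (⊥ : SimpleGraph (Fin 1)) G) → C β H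

/-- `G` has a universal vertex. -/
def HasUniversalVertex (G : SimpleGraph V) : Prop :=
  ∃ v : V, ∀ w : V, w ≠ v → G.Adj v w



/-- `G` is a theta: two nonadjacent vertices joined by three internally disjoint induced
paths of length at least two, with no other vertices or edges
(equivalently, a subdivision of `K_{2,3}`). -/
def IsTheta (G : SimpleGraph V) : Prop :=
  ∃ (a b : V) (P₁ P₂ P₃ : G.Walk a b),
    a ≠ b ∧
    P₁.IsPath ∧ P₂.IsPath ∧ P₃.IsPath ∧
    2 ≤ P₁.length ∧ 2 ≤ P₂.length ∧ 2 ≤ P₃.length ∧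
    (∀ v : V, v ∈ P₁.support → v ∈ P₂.support → v = a ∨ v = b) ∧
    (∀ v : V, v ∈ P₁.support → v ∈ P₃.support → v = a ∨ v = b) ∧
    (∀ v : V, v ∈ P₂.support → v ∈ P₃.support → v = a ∨ v = b) ∧
    (∀ v : V, v ∈ P₁.support ∨ v ∈ P₂.support ∨ v ∈ P₃.support) ∧
    (∀ u v : V, G.Adj u v ↔
      s(u, v) ∈ P₁.edges ∨ s(u, v) ∈ P₂.edges ∨ s(u, v) ∈ P₃.edges)

/-- `G` is a pyramid: an apex `a` joined to a triangle `b₁b₂b₃` by three paths sharing only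
`a`, at least two of which have length at least two, with no other vertices or edges. -/
def IsPyramid (G : SimpleGraph V) : Prop :=
  ∃ (a b₁ b₂ b₃ : V) (P₁ : G.Walk a b₁) (P₂ : G.Walk a b₂) (P₃ : G.Walk a b₃),
    G.Adj b₁ b₂ ∧ G.Adj b₁ b₃ ∧ G.Adj b₂ b₃ ∧
    P₁.IsPath ∧ P₂.IsPath ∧ P₃.IsPath ∧
    1 ≤ P₁.length ∧ 1 ≤ P₂.length ∧ 1 ≤ P₃.length ∧
    ((2 ≤ P₁.length ∧ 2 ≤ P₂.length) ∨ (2 ≤ P₁.length ∧ 2 ≤ P₃.length) ∨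
      (2 ≤ P₂.length ∧ 2 ≤ P₃.length)) ∧
    (∀ v : V, v ∈ P₁.support → v ∈ P₂.support → v = a) ∧
    (∀ v : V, v ∈ P₁.support → v ∈ P₃.support → v = a) ∧
    (∀ v : V, v ∈ P₂.support → v ∈ P₃.support → v = a) ∧
    (∀ v : V, v ∈ P₁.support ∨ v ∈ P₂.support ∨ v ∈ P₃.support) ∧
    (∀ u v : V, G.Adj u v ↔
      s(u, v) ∈ P₁.edges ∨ s(u, v) ∈ P₂.edges ∨ s(u, v) ∈ P₃.edges ∨
      s(u, v) = s(b₁, b₂) ∨ s(u, v) = s(b₁, b₃) ∨ s(u, v) = s(b₂, b₃))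

/-- `G` is a prism: two disjoint triangles joined by three pairwise disjoint paths, with no
other vertices or edges. -/
def IsPrism (G : SimpleGraph V) : Prop :=
  ∃ (a₁ a₂ a₃ b₁ b₂ b₃ : V) (P₁ : G.Walk a₁ b₁) (P₂ : G.Walk a₂ b₂) (P₃ : G.Walk a₃ b₃),
    G.Adj a₁ a₂ ∧ G.Adj a₁ a₃ ∧ G.Adj a₂ a₃ ∧
    G.Adj b₁ b₂ ∧ G.Adj b₁ b₃ ∧ G.Adj b₂ b₃ ∧
    P₁.IsPath ∧ P₂.IsPath ∧ P₃.IsPath ∧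
    1 ≤ P₁.length ∧ 1 ≤ P₂.length ∧ 1 ≤ P₃.length ∧
    (∀ v : V, v ∈ P₁.support → v ∈ P₂.support → False) ∧
    (∀ v : V, v ∈ P₁.support → v ∈ P₃.support → False) ∧
    (∀ v : V, v ∈ P₂.support → v ∈ P₃.support → False) ∧
    (∀ v : V, v ∈ P₁.support ∨ v ∈ P₂.support ∨ v ∈ P₃.support) ∧
    (∀ u v : V, G.Adj u v ↔
      s(u, v) ∈ P₁.edges ∨ s(u, v) ∈ P₂.edges ∨ s(u, v) ∈ P₃.edges ∨
      s(u, v) = s(a₁, a₂) ∨ s(u, v) = s(a₁, a₃) ∨ s(u, v) = s(a₂, a₃) ∨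
      s(u, v) = s(b₁, b₂) ∨ s(u, v) = s(b₁, b₃) ∨ s(u, v) = s(b₂, b₃))

/-- `G` is a long prism: a prism other than the complement of `C₆`, i.e. a prism in which at
least one of the three paths has length at least two. -/
def IsLongPrism (G : SimpleGraph V) : Prop :=
  ∃ (a₁ a₂ a₃ b₁ b₂ b₃ : V) (P₁ : G.Walk a₁ b₁) (P₂ : G.Walk a₂ b₂) (P₃ : G.Walk a₃ b₃),
    G.Adj a₁ a₂ ∧ G.Adj a₁ a₃ ∧ G.Adj a₂ a₃ ∧
    G.Adj b₁ b₂ ∧ G.Adj b₁ b₃ ∧ G.Adj b₂ b₃ ∧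
    P₁.IsPath ∧ P₂.IsPath ∧ P₃.IsPath ∧
    1 ≤ P₁.length ∧ 1 ≤ P₂.length ∧ 1 ≤ P₃.length ∧
    (2 ≤ P₁.length ∨ 2 ≤ P₂.length ∨ 2 ≤ P₃.length) ∧
    (∀ v : V, v ∈ P₁.support → v ∈ P₂.support → False) ∧
    (∀ v : V, v ∈ P₁.support → v ∈ P₃.support → False) ∧
    (∀ v : V, v ∈ P₂.support → v ∈ P₃.support → False) ∧
    (∀ v : V, v ∈ P₁.support ∨ v ∈ P₂.support ∨ v ∈ P₃.support) ∧
    (∀ u v : V, G.Adj u v ↔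
      s(u, v) ∈ P₁.edges ∨ s(u, v) ∈ P₂.edges ∨ s(u, v) ∈ P₃.edges ∨
      s(u, v) = s(a₁, a₂) ∨ s(u, v) = s(a₁, a₃) ∨ s(u, v) = s(a₂, a₃) ∨
      s(u, v) = s(b₁, b₂) ∨ s(u, v) = s(b₁, b₃) ∨ s(u, v) = s(b₂, b₃))

/-- `G` is a wheel: a hole (chordless cycle of length at least four) together with one
additional vertex having at least three neighbors on the hole. -/
def IsWheel (G : SimpleGraph V) : Prop :=
  ∃ (v x : V) (c : G.Walk x x),
    c.IsCycle ∧ 4 ≤ c.length ∧ v ∉ c.support ∧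
    (∀ u : V, u = v ∨ u ∈ c.support) ∧
    (∀ u w : V, u ∈ c.support → w ∈ c.support → G.Adj u w → s(u, w) ∈ c.edges) ∧
    3 ≤ {u : V | u ∈ c.support ∧ G.Adj v u}.ncard

/-- `G` is a broken wheel: a wheel in which the neighbors of the additional vertex induce a
disconnected subgraph of the hole. -/
def IsBrokenWheel (G : SimpleGraph V) : Prop :=
  ∃ (v x : V) (c : G.Walk x x),
    c.IsCycle ∧ 4 ≤ c.length ∧ v ∉ c.support ∧
    (∀ u : V, u = v ∨ u ∈ c.support) ∧
    (∀ u w : V, u ∈ c.support → w ∈ c.support → G.Adj u w → s(u, w) ∈ c.edges) ∧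
    3 ≤ {u : V | u ∈ c.support ∧ G.Adj v u}.ncard ∧
    ¬ (G.induce {u : V | u ∈ c.support ∧ G.Adj v u}).Connected

/-- `G` is diamond-free: it has no induced subgraph isomorphic to `K₄` minus an edge. -/
def DiamondFree (G : SimpleGraph V) : Prop :=
  ¬ ∃ a b c d : V, c ≠ d ∧ G.Adj a b ∧ G.Adj a c ∧ G.Adj a d ∧ G.Adj b c ∧ G.Adj b d ∧
    ¬ G.Adj c d

/-- The short `n`-prism: two `n`-vertex cliques joined by a perfect matching. -/
def completePrism (n : ℕ) : SimpleGraph (Fin n ⊕ Fin n) :=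
  SimpleGraph.fromRel (fun x y =>
    match x, y with
    | Sum.inl _, Sum.inl _ => True
    | Sum.inr _, Sum.inr _ => True
    | Sum.inl i, Sum.inr j => i = j
    | Sum.inr i, Sum.inl j => i = j)

/-- `G` is a complete prism, i.e. a short `n`-prism for some `n ≥ 3`. -/
def IsCompletePrism (G : SimpleGraph V) : Prop :=
  ∃ n : ℕ, 3 ≤ n ∧ Nonempty (G ≃g completePrism n)

/-- `G` is a cycle. -/
def IsCycleGraph (G : SimpleGraph V) : Prop :=
  ∃ n : ℕ, 3 ≤ n ∧ Nonempty (G ≃g cycleGraph n)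

/-- `G` is a complete graph. -/
def IsCompleteGraph (G : SimpleGraph V) : Prop :=
  ∀ u v : V, u ≠ v → G.Adj u v

/-- `G` has a clique-cutset. -/
def HasCliqueCutset (G : SimpleGraph V) : Prop :=
  ∃ K : Set V, G.IsClique K ∧ IsCutset G K



/-! A minimal separator `S` of an induced subgraph `H` of `G` lies inside a minimal separator `S'`
of `G`: together with the vertices outside `H`, `S` separates the same pair in `G`, and a minimal
separator inside that set must keep all of `S`, since each vertex of `S` lies on a path of `H`
avoiding the rest of `S`. Then `H[S]` is an induced subgraph of `G[S'] ∈ C`. -/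

section InducedSubgraphs

variable {α β : Type} {G : SimpleGraph α} {H : SimpleGraph β}

lemma ConnAvoid.map (f : H →g G) {S : Set β} {T : Set α} (hST : f ⁻¹' T ⊆ S) {a b : β}
    (h : ConnAvoid H S a b) : ConnAvoid G T (f a) (f b) := by
  obtain ⟨p, hp⟩ := h
  refine ⟨p.map f, fun v hv hvT => ?_⟩
  rw [Walk.support_map] at hv
  obtain ⟨u, hu, rfl⟩ := List.mem_map.mp hv
  exact hp u hu (hST hvT)

lemma ConnAvoid.comap (f : H ↪g G) {T : Set α} (hT : (Set.range f)ᶜ ⊆ T) {a b : β}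
    (h : ConnAvoid G T (f a) (f b)) : ConnAvoid H (f ⁻¹' T) a b := by
  obtain ⟨p, hp⟩ := h
  have hrange : ∀ v ∈ p.support, v ∈ Set.range f := fun v hv => by
    by_contra hv'
    exact hp v hv (hT hv')
  let e := f.isoInduceRange
  have he : ∀ c : β, e.symm ⟨f c, c, rfl⟩ = c := fun c => e.symm_apply_apply c
  refine ⟨((p.induce _ hrange).map e.symm.toHom).copy (he a) (he b), fun v hv hvT => ?_⟩
  simp only [Walk.support_copy, Walk.support_map, Walk.support_induce, List.mem_map,
    List.mem_attachWith] at hv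
  obtain ⟨w, hw, rfl⟩ := hv
  have hfw : f (e.symm w) = w := congrArg Subtype.val (e.apply_symm_apply w)
  exact hp w hw (hfw ▸ hvT)

lemma IsSep.exists_isMinSep_subset [Finite α] {a b : α} {T : Set α} (h : IsSep G a b T) :
    ∃ S ⊆ T, IsMinSep G a b S := by
  obtain ⟨S, hST, hS⟩ := exists_minimal_le_of_wellFoundedLT (IsSep G a b) T h
  exact ⟨S, hST, hS.prop, fun _ hlt hsep => hS.not_prop_of_lt hlt hsep⟩

lemma IsMinSep.exists_isMinSep_image_subset [Finite α] (f : H ↪g G) {a b : β} {S : Set β}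
    (h : IsMinSep H a b S) : ∃ S', IsMinSep G (f a) (f b) S' ∧ f '' S ⊆ S' := by
  obtain ⟨⟨haS, hbS, hab⟩, hmin⟩ := h
  set T := f '' S ∪ (Set.range f)ᶜ
  have hpre : f ⁻¹' T = S := by
    simp [T, Set.preimage_union, Set.preimage_image_eq S f.injective]
  have hsep : IsSep G (f a) (f b) T := by
    refine ⟨?_, ?_, fun hc => hab (hpre ▸ hc.comap f Set.subset_union_right)⟩ <;>
      simpa [T, f.injective.mem_set_image]
  obtain ⟨S', hS'T, hS'⟩ := hsep.exists_isMinSep_subset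
  refine ⟨S', hS', ?_⟩
  rintro _ ⟨v, hv, rfl⟩
  by_contra hvS'
  have hconn : ConnAvoid H (S \ {v}) a b := by
    by_contra hc
    exact hmin _ (Set.sdiff_singleton_ssubset.mpr hv) ⟨fun h => haS h.1, fun h => hbS h.1, hc⟩
  refine hS'.1.2.2 (hconn.map f.toHom fun w hw => ?_)
  refine ⟨hpre ▸ hS'T hw, ?_⟩
  rintro rfl
  exact hvS' hw

def induceEmbedding (f : H ↪g G) {s : Set β} {t : Set α} (hst : Set.MapsTo f s t) :
    H.induce s ↪g G.induce t where
  toFun := hst.restrict f s t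
  inj' := (Set.MapsTo.restrict_inj hst).mpr f.injective.injOn
  map_rel_iff' := f.map_adj_iff

lemma Hereditary.of_embedding {C : GraphClass} (hC : Hereditary C) [Finite α] [Finite β]
    (f : H ↪g G) (hG : C α G) : C β H :=
  hC α G β H _ ⟨f.isoInduceRange⟩ hG

end InducedSubgraphs

/-- if `C` is a hereditary class of graphs, then `𝒢_C` is hereditary. -/
theorem statement_1 (C : GraphClass) (hC : Hereditary C) : Hereditary (GCclass C) := by
  rintro α _ G β _ H s ⟨e⟩ hG S ⟨a, b, hab, hadj, hS⟩
  let f : H ↪g G := (Embedding.induce s).comp e.toEmbedding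
  obtain ⟨S', hS', hsub⟩ := hS.exists_isMinSep_image_subset f
  have hGS' : C S' (G.induce S') :=
    hG S' ⟨f a, f b, f.injective.ne hab, fun h => hadj (f.map_adj_iff.mp h), hS'⟩
  exact hC.of_embedding (induceEmbedding f fun v hv => hsub ⟨v, hv, rfl⟩) hGS'

end PaperSep
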